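/- arXiv:1506.06938 — 2 statements merged into one kernel-verified Lean document; each statement's English description precedes it below -/
import Mathlib

section
/- For every d ≥ 1 there is a positive constant C_d such that if K ⊂ ℝ^d is compact and S ⊂ ℝ^d is open, then for every positive integer k, m_{dk}({(x_0 − x_1, x_0 − x_2, …, x_0 − x_k) : x_0, …, x_k ∈ K})^{1/(k+1)} · m_d(S)^{1 − k/(k+1)} ≤ C_d · m_d(K + S), where m_n denotes Lebesgue measure on ℝ^n. -/
/-!
The shear `(v, y) ↦ (y, (y - vᵢ)ᵢ)` preserves Haar measure on `Gᵏ × G`, and the preimage of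
`(K + S)ᵏ⁺¹` under it contains, above each `v = (x₀ - xᵢ)ᵢ` with `x₀, xᵢ ∈ K`, the translate
`x₀ + S`. By Fubini, `m(D) m(S) ≤ m(K + S)ᵏ⁺¹` for the set `D` of such `v`, and taking
`(k + 1)`-th roots gives the claim with `C_d = 1`.
-/

open MeasureTheory Set Pointwise

theorem measure_mul_le_prod_of_le_measure_slice {α β : Type*} [MeasurableSpace α]
    [MeasurableSpace β] (μ : Measure α) (ν : Measure β) [SFinite ν] {A : Set (α × β)}
    (hA : MeasurableSet A) {D : Set α} {c : ENNReal}
    (hD : ∀ x ∈ D, c ≤ ν (Prod.mk x ⁻¹' A)) :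
    μ D * c ≤ μ.prod ν A := by
  rw [Measure.prod_apply hA, mul_comm]
  calc c * μ D ≤ c * μ {x | c ≤ ν (Prod.mk x ⁻¹' A)} := by gcongr; exact hD
    _ ≤ _ := mul_meas_ge_le_lintegral (measurable_measure_prodMk_left hA) c

theorem ENNReal.rpow_mul_rpow_le_of_mul_le_pow {a b c : ENNReal} {k : ℕ}
    (h : a * b ≤ c ^ (k + 1)) :
    a ^ ((1 : ℝ) / (k + 1)) * b ^ (1 - (k : ℝ) / (k + 1)) ≤ c := by
  have hexp : (1 : ℝ) - k / (k + 1) = 1 / (k + 1) := by field_simp; ring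
  have hr : (0 : ℝ) ≤ 1 / (k + 1) := by positivity
  calc a ^ ((1 : ℝ) / (k + 1)) * b ^ (1 - (k : ℝ) / (k + 1))
      = (a * b) ^ ((1 : ℝ) / (k + 1)) := by rw [hexp, ENNReal.mul_rpow_of_nonneg _ _ hr]
    _ ≤ (c ^ (k + 1)) ^ ((1 : ℝ) / (k + 1)) := ENNReal.rpow_le_rpow h hr
    _ = c := by
        rw [← ENNReal.rpow_natCast, ← ENNReal.rpow_mul, Nat.cast_succ,
          mul_one_div_cancel (by positivity), ENNReal.rpow_one]

section Shear

variable {G ι : Type*} [AddCommGroup G]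

def diagonalDifferences (K : Set G) (ι : Type*) : Set (ι → G) :=
  {v | ∃ x₀ ∈ K, ∃ x : ι → G, (∀ i, x i ∈ K) ∧ v = fun i => x₀ - x i}

def shear (p : (ι → G) × G) : G × (ι → G) :=
  (p.2, fun i => p.2 - p.1 i)

theorem vadd_subset_preimage_shear {K S : Set G} {x₀ : G} (hx₀ : x₀ ∈ K) {x : ι → G}
    (hx : ∀ i, x i ∈ K) :
    x₀ +ᵥ S ⊆ Prod.mk (fun i => x₀ - x i) ⁻¹' (shear ⁻¹' ((K + S) ×ˢ univ.pi fun _ => K + S)) := by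
  rintro _ ⟨s, hs, rfl⟩
  refine ⟨add_mem_add hx₀ hs, fun i _ => ?_⟩
  convert add_mem_add (hx i) hs using 1
  simp only [shear, vadd_eq_add]
  abel

variable [MeasurableSpace G] [MeasurableAdd₂ G] [MeasurableNeg G] [Fintype ι]
  (μ : Measure G) [SigmaFinite μ] [μ.IsAddLeftInvariant] [μ.IsNegInvariant]

theorem measurePreserving_shear :
    MeasurePreserving (shear (ι := ι)) ((Measure.pi fun _ => μ).prod μ)
      (μ.prod (Measure.pi fun _ => μ)) := by
  have : MeasurePreserving (fun p : G × (ι → G) => (p.1, fun i => p.1 - p.2 i))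
      (μ.prod (Measure.pi fun _ => μ)) (μ.prod (Measure.pi fun _ => μ)) :=
    (MeasurePreserving.id μ).skew_product (by fun_prop) <| ae_of_all _ fun y =>
      (Measure.measurePreserving_sub_left (Measure.pi fun _ => μ) (fun _ => y)).map_eq
  exact this.comp Measure.measurePreserving_swap

theorem measure_pi_diagonalDifferences_mul_le (K S : Set G) (hKS : MeasurableSet (K + S)) :
    Measure.pi (fun _ : ι => μ) (diagonalDifferences K ι) * μ S ≤
      μ (K + S) ^ (Fintype.card ι + 1) := by
  have hT : MeasurableSet ((K + S) ×ˢ univ.pi fun _ : ι => K + S) :=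
    hKS.prod (.univ_pi fun _ => hKS)
  calc Measure.pi (fun _ : ι => μ) (diagonalDifferences K ι) * μ S
      ≤ ((Measure.pi fun _ => μ).prod μ) (shear ⁻¹' ((K + S) ×ˢ univ.pi fun _ => K + S)) := by
        refine measure_mul_le_prod_of_le_measure_slice _ _
          ((measurePreserving_shear μ).measurable hT) ?_
        rintro _ ⟨x₀, hx₀, x, hx, rfl⟩
        calc μ S = μ (x₀ +ᵥ S) := (measure_vadd μ x₀ S).symm
          _ ≤ _ := measure_mono (vadd_subset_preimage_shear hx₀ hx)
    _ = μ (K + S) ^ (Fintype.card ι + 1) := by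
        rw [(measurePreserving_shear μ).measure_preimage hT.nullMeasurableSet, Measure.prod_prod,
          Measure.pi_pi, Finset.prod_const, Finset.card_univ, pow_succ']

end Shear

theorem stmt4_general (d : ℕ) :
    ∃ C : ℝ, 0 < C ∧
      ∀ K S : Set (EuclideanSpace ℝ (Fin d)), IsCompact K → IsOpen S →
        ∀ k : ℕ, 1 ≤ k →
          (volume {v : Fin k → EuclideanSpace ℝ (Fin d) |
              ∃ x₀ ∈ K, ∃ x : Fin k → EuclideanSpace ℝ (Fin d),
                (∀ i, x i ∈ K) ∧ v = fun i => x₀ - x i}) ^ ((1 : ℝ) / (k + 1))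
            * (volume S) ^ (1 - (k : ℝ) / (k + 1))
            ≤ ENNReal.ofReal C * volume (K + S) := by
  refine ⟨1, one_pos, fun K S _ hS k _ => ?_⟩
  rw [ENNReal.ofReal_one, one_mul]
  apply ENNReal.rpow_mul_rpow_le_of_mul_le_pow
  have h := measure_pi_diagonalDifferences_mul_le (ι := Fin k) volume K S hS.add_left.measurableSet
  rwa [Fintype.card_fin] at h

theorem stmt4 (d : ℕ) (hd : 1 ≤ d) :
    ∃ C : ℝ, 0 < C ∧
      ∀ K S : Set (EuclideanSpace ℝ (Fin d)), IsCompact K → IsOpen S →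
        ∀ k : ℕ, 1 ≤ k →
          (volume {v : Fin k → EuclideanSpace ℝ (Fin d) |
              ∃ x₀ ∈ K, ∃ x : Fin k → EuclideanSpace ℝ (Fin d),
                (∀ i, x i ∈ K) ∧ v = fun i => x₀ - x i}) ^ ((1 : ℝ) / (k + 1))
            * (volume S) ^ (1 - (k : ℝ) / (k + 1))
            ≤ ENNReal.ofReal C * volume (K + S) :=
  stmt4_general d
end

section
/- Fix an integer J > 2 and a real number r with 2/(3J) ≤ r < 1/(J+1). Let V = {(0,0), (0,J), (J,0), (J,2J), (2J,J), (2J,2J)} ⊂ ℝ². For F ⊂ ℝ define T(F) = ⋃_{j=0}^J (r·F + j) and D(F) = {(x_0 − x_1, x_0 − x_2) : x_0, x_1, x_2 ∈ F}. If for some w ∈ ℝ² and some F ⊂ ℝ the set D(F) contains w + conv(V), then D(T(F)) contains r·w + (1−J, 1−J) + conv(V). -/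
open Set Pointwise

/-- `T(F) = ⋃_{j=0}^J (r·F + j)`. -/
def Tmap (J : ℕ) (r : ℝ) (F : Set ℝ) : Set ℝ :=
  ⋃ j ∈ Finset.range (J + 1), (fun x => r * x + (j : ℝ)) '' F

/-- `D(F) = {(x₀ - x₁, x₀ - x₂) : xᵢ ∈ F}`. -/
def Dmap (F : Set ℝ) : Set (ℝ × ℝ) :=
  {p | ∃ x₀ ∈ F, ∃ x₁ ∈ F, ∃ x₂ ∈ F, p = (x₀ - x₁, x₀ - x₂)}

/-! Write `conv V` as the hexagon `H_J = {0 ≤ x, y ≤ 2J, |x - y| ≤ J}`. Since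
`D(T F) ⊇ r • D(F) + D({0, …, J})` and the lattice points of `H_J - (J, J)` all lie in
`D({0, …, J})`, it suffices to cover `H_J` by the translates `(a, b) + r • H_J` with
`(a + 1, b + 1)` a lattice point of `H_J`. Rounding both coordinates up does this, except when
their fractional offsets differ by more than `rJ`; then shifting one coordinate down by one
more works, and this is where `rJ ≥ 2/3` is needed. -/

def hexagon {R : Type*} [Ring R] [LE R] (s : R) : Set (R × R) :=
  {p | 0 ≤ p.1 ∧ p.1 ≤ 2 * s ∧ 0 ≤ p.2 ∧ p.2 ≤ 2 * s ∧ p.1 - p.2 ≤ s ∧ p.2 - p.1 ≤ s}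

theorem swap_mem_hexagon {R : Type*} [Ring R] [LE R] {s : R} {p : R × R} :
    p.swap ∈ hexagon s ↔ p ∈ hexagon s := by
  simp only [hexagon, mem_ofPred_eq, Prod.fst_swap, Prod.snd_swap]
  tauto

theorem convex_hexagon (s : ℝ) : Convex ℝ (hexagon s) := by
  rintro u ⟨u1, u2, u3, u4, u5, u6⟩ v ⟨v1, v2, v3, v4, v5, v6⟩ a b ha hb hab
  simp only [hexagon, mem_ofPred_eq, Prod.fst_add, Prod.snd_add, Prod.smul_fst, Prod.smul_snd,
    smul_eq_mul]
  refine ⟨by positivity, ?_, by positivity, ?_, ?_, ?_⟩ <;> nlinarith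

theorem hexagon_mul {r : ℝ} (hr : 0 < r) (s : ℝ) : hexagon (r * s) = r • hexagon s := by
  ext p
  rw [mem_smul_set_iff_inv_smul_mem₀ hr.ne']
  have hle : ∀ a b : ℝ, r⁻¹ * a ≤ b ↔ a ≤ r * b := fun _ _ => inv_mul_le_iff₀ hr
  have hnonneg : ∀ a : ℝ, 0 ≤ r⁻¹ * a ↔ 0 ≤ a := fun _ =>
    mul_nonneg_iff_of_pos_left (inv_pos.2 hr)
  simp only [hexagon, mem_ofPred_eq, Prod.smul_fst, Prod.smul_snd, smul_eq_mul, ← mul_sub, hle,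
    hnonneg, mul_left_comm r 2]

theorem hexagon_subset_square_add_diagonal {s : ℝ} (hs : 0 < s) :
    hexagon s ⊆ convexHull ℝ ({0, s} ×ˢ {0, s}) + convexHull ℝ {((0 : ℝ), (0 : ℝ)), (s, s)} := by
  rintro ⟨x, y⟩ ⟨h1, h2, h3, h4, h5, h6⟩
  set t := max 0 (max (x - s) (y - s))
  have ht0 : 0 ≤ t := le_max_left _ _
  have hts : t ≤ s := max_le hs.le (max_le (by linarith) (by linarith))
  have htx : x - s ≤ t := (le_max_left _ _).trans (le_max_right _ _)
  have hty : y - s ≤ t := (le_max_right _ _).trans (le_max_right _ _)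
  have htx' : t ≤ x := max_le h1 (max_le (by linarith) (by linarith))
  have hty' : t ≤ y := max_le h3 (max_le (by linarith) (by linarith))
  refine ⟨(x - t, y - t), ?_, (t, t), ?_, by simp⟩
  · rw [convexHull_prod, convexHull_pair, segment_eq_Icc hs.le]
    exact ⟨⟨by linarith, by linarith⟩, ⟨by linarith, by linarith⟩⟩
  · rw [convexHull_pair]
    refine ⟨1 - t / s, t / s, by rw [sub_nonneg, div_le_one hs]; exact hts, by positivity,
      by ring, ?_⟩
    ext <;> simp [field]

theorem convexHull_eq_hexagon {s : ℝ} (hs : 0 < s) :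
    convexHull ℝ {((0 : ℝ), (0 : ℝ)), (0, s), (s, 0), (s, 2 * s), (2 * s, s), (2 * s, 2 * s)} =
      hexagon s := by
  set V : Set (ℝ × ℝ) := {(0, 0), (0, s), (s, 0), (s, 2 * s), (2 * s, s), (2 * s, 2 * s)}
  refine (convexHull_min ?_ (convex_hexagon s)).antisymm ?_
  · rintro q hq
    simp only [V, mem_insert_iff, mem_singleton_iff] at hq
    rcases hq with rfl | rfl | rfl | rfl | rfl | rfl <;>
      refine ⟨?_, ?_, ?_, ?_, ?_, ?_⟩ <;> dsimp only <;> linarith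
  refine (hexagon_subset_square_add_diagonal hs).trans ?_
  rw [← convexHull_add]
  refine convexHull_min ?_ (convex_convexHull ℝ V)
  have hmid : (s, s) ∈ convexHull ℝ V :=
    segment_subset_convexHull (x := (0, 0)) (y := (2 * s, 2 * s)) (by simp [V]) (by simp [V])
      ⟨1 / 2, 1 / 2, by norm_num, by norm_num, by norm_num, by ext <;> simp⟩
  rintro _ ⟨⟨a₁, a₂⟩, ⟨ha₁, ha₂⟩, b, hb, rfl⟩
  simp only [mem_insert_iff, mem_singleton_iff] at ha₁ ha₂ hb
  rcases ha₁ with rfl | rfl <;> rcases ha₂ with rfl | rfl <;> rcases hb with rfl | rfl <;>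
    simp only [Prod.mk_add_mk, add_zero, zero_add]
  all_goals first
    | exact hmid
    | exact subset_convexHull ℝ V (by simp [V, two_mul])

theorem exists_nat_sub_eq_of_mem_hexagon {J : ℕ} {z : ℤ × ℤ} (hz : z ∈ hexagon (J : ℤ)) :
    ∃ j₀ ≤ J, ∃ j₁ ≤ J, ∃ j₂ ≤ J, (j₀ : ℤ) - j₁ = z.1 - J ∧ (j₀ : ℤ) - j₂ = z.2 - J := by
  obtain ⟨h1, h2, h3, h4, h5, h6⟩ := hz
  set m := max (z.1 - J) (z.2 - J)
  exact ⟨m.toNat, by omega, (m.toNat + J - z.1).toNat, by omega, (m.toNat + J - z.2).toNat,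
    by omega, by omega, by omega⟩

theorem exists_int_sub_mem_hexagon (J : ℕ) {t : ℝ} (ht : 2 / 3 ≤ t) {q : ℝ × ℝ}
    (hq : q ∈ hexagon (J : ℝ)) :
    ∃ a b : ℤ, (a + 1, b + 1) ∈ hexagon (J : ℤ) ∧ (q.1 - a, q.2 - b) ∈ hexagon t := by
  obtain ⟨x, y⟩ := q
  wlog hyx : y - ⌈y⌉ ≤ x - ⌈x⌉ generalizing x y
  · obtain ⟨b, a, hba, hmem⟩ := this y x (swap_mem_hexagon.2 hq) (by linarith)
    exact ⟨a, b, swap_mem_hexagon.1 hba, swap_mem_hexagon.1 hmem⟩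
  obtain ⟨h1, h2, h3, h4, h5, h6⟩ := hq
  dsimp only at h1 h2 h3 h4 h5 h6 ⊢
  set A := ⌈x⌉
  set B := ⌈y⌉
  have hxA : x ≤ A := Int.le_ceil x
  have hAx : (A : ℝ) < x + 1 := Int.ceil_lt_add_one x
  have hyB : y ≤ B := Int.le_ceil y
  have hBy : (B : ℝ) < y + 1 := Int.ceil_lt_add_one y
  have hA0 : 0 ≤ A := Int.ceil_nonneg h1
  have hB0 : 0 ≤ B := Int.ceil_nonneg h3
  have hA2J : A ≤ 2 * J := Int.ceil_le.2 (by push_cast; linarith)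
  have hB2J : B ≤ 2 * J := Int.ceil_le.2 (by push_cast; linarith)
  have hAB : A ≤ B + J := Int.ceil_le.2 (by push_cast; linarith)
  have hBA : B ≤ A + J := Int.ceil_le.2 (by push_cast; linarith)
  by_cases hc : (x - A) - (y - B) ≤ t
  · refine ⟨A - 1, B - 1, ⟨?_, ?_, ?_, ?_, ?_, ?_⟩, ⟨?_, ?_, ?_, ?_, ?_, ?_⟩⟩ <;> dsimp only <;>
      push_cast <;> first | omega | linarith
  -- Shift `y` down once more: the offset `y - B + 2 < 2 - t` still fits since `2 - t ≤ 2t`.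
  rw [not_le] at hc
  have hB1 : 1 ≤ B := by
    by_contra hB1
    have hB_eq : (B : ℝ) = 0 := by exact_mod_cast (by omega : B = 0)
    linarith
  have hAB' : A < B + J := by
    have : (A : ℝ) < B + J := by linarith
    exact_mod_cast this
  refine ⟨A - 1, B - 2, ⟨?_, ?_, ?_, ?_, ?_, ?_⟩, ⟨?_, ?_, ?_, ?_, ?_, ?_⟩⟩ <;> dsimp only <;>
    push_cast <;> first | omega | linarith

theorem smul_add_sub_mem_Dmap_Tmap {J : ℕ} {r : ℝ} {F : Set ℝ} {d : ℝ × ℝ} (hd : d ∈ Dmap F)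
    {j₀ j₁ j₂ : ℕ} (h₀ : j₀ ≤ J) (h₁ : j₁ ≤ J) (h₂ : j₂ ≤ J) :
    r • d + ((j₀ : ℝ) - j₁, (j₀ : ℝ) - j₂) ∈ Dmap (Tmap J r F) := by
  obtain ⟨x₀, hx₀, x₁, hx₁, x₂, hx₂, rfl⟩ := hd
  have hmem : ∀ j ≤ J, ∀ x ∈ F, r * x + j ∈ Tmap J r F := fun j hj x hx =>
    mem_biUnion (Finset.mem_range.2 (Nat.lt_succ_of_le hj)) (mem_image_of_mem _ hx)
  exact ⟨_, hmem j₀ h₀ x₀ hx₀, _, hmem j₁ h₁ x₁ hx₁, _, hmem j₂ h₂ x₂ hx₂, by ext <;> simp <;> ring⟩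

theorem stmt14_general (J : ℕ) (hJ : 2 < J) (r : ℝ)
    (hr1 : 2 / (3 * (J : ℝ)) ≤ r)
    (V : Set (ℝ × ℝ))
    (hV : V = {((0 : ℝ), (0 : ℝ)), (0, (J : ℝ)), ((J : ℝ), 0), ((J : ℝ), 2 * (J : ℝ)),
      (2 * (J : ℝ), (J : ℝ)), (2 * (J : ℝ), 2 * (J : ℝ))})
    (F : Set ℝ) (w : ℝ × ℝ)
    (h : {w} + convexHull ℝ V ⊆ Dmap F) :
    {r • w + ((1 - (J : ℝ), 1 - (J : ℝ)) : ℝ × ℝ)} + convexHull ℝ V ⊆ Dmap (Tmap J r F) := by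
  have hJ0 : (0 : ℝ) < J := by exact_mod_cast (by omega : 0 < J)
  have hr0 : 0 < r := (by positivity : (0 : ℝ) < 2 / (3 * J)).trans_le hr1
  have hrJ : 2 / 3 ≤ r * J := by
    rw [div_le_iff₀ (by positivity)] at hr1
    linarith
  subst hV
  rw [convexHull_eq_hexagon hJ0] at h ⊢
  rintro _ ⟨_, rfl, q, hq, rfl⟩
  obtain ⟨a, b, hab, hq'⟩ := exists_int_sub_mem_hexagon J hrJ hq
  rw [hexagon_mul hr0] at hq'
  obtain ⟨v, hv, hvq : r • v = _⟩ := hq'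
  obtain ⟨j₀, h₀, j₁, h₁, j₂, h₂, hj₁, hj₂⟩ := exists_nat_sub_eq_of_mem_hexagon hab
  convert smul_add_sub_mem_Dmap_Tmap (h ⟨w, rfl, v, hv, rfl⟩) h₀ h₁ h₂ using 1
  have e₁ : (j₀ : ℝ) - j₁ = a + 1 - J := by exact_mod_cast hj₁
  have e₂ : (j₀ : ℝ) - j₂ = b + 1 - J := by exact_mod_cast hj₂
  dsimp only
  rw [smul_add, hvq, e₁, e₂]
  ext <;> simp <;> ring

theorem stmt14 (J : ℕ) (hJ : 2 < J) (r : ℝ)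
    (hr1 : 2 / (3 * (J : ℝ)) ≤ r) (hr2 : r < 1 / ((J : ℝ) + 1))
    (V : Set (ℝ × ℝ))
    (hV : V = {((0 : ℝ), (0 : ℝ)), (0, (J : ℝ)), ((J : ℝ), 0), ((J : ℝ), 2 * (J : ℝ)),
      (2 * (J : ℝ), (J : ℝ)), (2 * (J : ℝ), 2 * (J : ℝ))})
    (F : Set ℝ) (w : ℝ × ℝ)
    (h : {w} + convexHull ℝ V ⊆ Dmap F) :
    {r • w + ((1 - (J : ℝ), 1 - (J : ℝ)) : ℝ × ℝ)} + convexHull ℝ V ⊆ Dmap (Tmap J r F) :=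
  stmt14_general J hJ r hr1 V hV F w h
end
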